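/- Let σ = (√5 − 1)/2 and define S_n = σ^(n−3)·((n+1)σ + 3). Then S_7 > 1 and S_8 < 1. -/

import Mathlib

noncomputable def σ : ℝ := (Real.sqrt 5 - 1) / 2

noncomputable def S (n : ℕ) : ℝ := σ ^ ((n : ℤ) - 3) * (((n : ℝ) + 1) * σ + 3)

/-! Since `σ² = 1 - σ`, every power of `σ` is affine in `σ`; this turns `S 7` and `S 8` into
`31σ - 18` and `36 - 57σ`, and both inequalities then amount to `σ > 35/57`. -/

lemma σ_sq : σ ^ 2 = 1 - σ := by
  have h5 : Real.sqrt 5 ^ 2 = 5 := Real.sq_sqrt (by norm_num)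
  unfold σ
  linear_combination h5 / 4

lemma σ_gt_35_div_57 : (35 / 57 : ℝ) < σ := by
  have h : (127 / 57 : ℝ) < Real.sqrt 5 := by
    rw [Real.lt_sqrt (by norm_num)]
    norm_num
  unfold σ
  linarith

lemma σ_pow_four : σ ^ 4 = 2 - 3 * σ := by
  linear_combination (σ ^ 2 - σ + 2) * σ_sq

lemma σ_pow_five : σ ^ 5 = 5 * σ - 3 := by
  linear_combination σ * σ_pow_four - 3 * σ_sq

lemma S_eq_of_three_le {n : ℕ} (hn : 3 ≤ n) :
    S n = σ ^ (n - 3) * (((n : ℝ) + 1) * σ + 3) := by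
  rw [S, ← Nat.cast_ofNat, ← Nat.cast_sub hn, zpow_natCast]

lemma S_seven : S 7 = 31 * σ - 18 := by
  rw [S_eq_of_three_le (by norm_num)]
  norm_num
  linear_combination (8 * σ + 3) * σ_pow_four - 24 * σ_sq

lemma S_eight : S 8 = 36 - 57 * σ := by
  rw [S_eq_of_three_le (by norm_num)]
  norm_num
  linear_combination (9 * σ + 3) * σ_pow_five + 45 * σ_sq

theorem stmt_12 : S 7 > 1 ∧ S 8 < 1 := by
  rw [S_seven, S_eight]
  constructor <;> linarith [σ_gt_35_div_57]
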